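/- Fix r, s ≥ 1, b ≥ 0, and let a₀ = ∑_{i=0}^{r−1} C(s,i) and a₁ = 2^s − a₀. Then for every n ≥ 0, every set system (X, F) with opR_r(F) ≤ b, and every 2^s-ary element tree of height n with labels from X, the number of leaves properly labeled by members of F is at most ∑_{i=0}^{b} C(n,i) · a₀^{n−i} · a₁^{i}; that is, ψ^s_{r,b}(n) ≤ ∑_{i=0}^{b} C(n,i) a₀^{n−i} a₁^{i}. -/

import Mathlib

/-- A leaf `ξ ∈ (2^s)^n` of a `2^s`-ary element tree `T` is properly labeled by `A ⊆ X`
if for all `j < n` and `i < s`, the `i`-th coordinate of the label of the initial segment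
`ξ|_{[j]}` belongs to `A` iff `ξ(j)(i) = 1`. -/
def OpProper {X : Type*} {s : ℕ} (T : List (Fin s → Bool) → (Fin s → X)) {n : ℕ}
    (ξ : Fin n → (Fin s → Bool)) (A : Set X) : Prop :=
  ∀ (j : Fin n) (i : Fin s), (T ((List.ofFn ξ).take j.1) i ∈ A ↔ ξ j i = true)

/-- There is a `2^s`-ary element tree of height `k` with labels from `X` in which every leaf
is properly labeled by some member of `F`. -/
def HasOpTree {X : Type*} (F : Set (Set X)) (s k : ℕ) : Prop :=
  ∃ T : List (Fin s → Bool) → (Fin s → X),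
    ∀ ξ : Fin k → (Fin s → Bool), ∃ A ∈ F, OpProper T ξ A

/-! Induct on the height. Leaves whose first step is `ε` are the leaves of the subtree below
`ε` properly labeled by the fibre `F_ε` of sets whose trace on the root label is `ε`. If more
than `a₀` fibres still carried op-trees of height `b`, the Sauer–Shelah lemma would give `r`
root coordinates on which these traces realise every pattern, and the fibres' trees would
assemble into an op-tree of height `b + 1` for `F`. So at most `a₀` children admit the bound
for rank `b` and the others that for rank `b - 1`, which is the Pascal recursion of the
binomial sum. -/

open Finset

section SauerShelah

variable {α : Type*} [Fintype α] [DecidableEq α]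

lemma Finset.exists_shatters_card_eq_of_sum_choose_lt {𝒜 : Finset (Finset α)} {r : ℕ}
    (h : ∑ k ∈ range r, (Fintype.card α).choose k < #𝒜) : ∃ I, 𝒜.Shatters I ∧ #I = r := by
  by_contra! hne
  have hlt : ∀ I, 𝒜.Shatters I → #I < r := fun I hI => by
    by_contra! hle
    obtain ⟨J, hJI, hJ⟩ := exists_subset_card_eq hle
    exact hne J (hI.mono_right hJI) hJ
  refine h.not_ge ((card_le_card_shatterer 𝒜).trans ?_)
  simp_rw [← card_univ, ← card_powersetCard]
  refine (card_le_card fun I hI => mem_biUnion.2 ⟨#I, ?_⟩).trans card_biUnion_le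
  exact ⟨mem_range.2 (hlt I (mem_shatterer.1 hI)), mem_powersetCard_univ.2 rfl⟩

lemma exists_forall_comp_eq_of_sum_choose_lt (E : Finset (α → Bool)) {r : ℕ}
    (h : ∑ k ∈ range r, (Fintype.card α).choose k < #E) :
    ∃ e : Fin r → α, ∀ δ : Fin r → Bool, ∃ ε ∈ E, ε ∘ e = δ := by
  let support (ε : α → Bool) : Finset α := univ.filter (ε · = true)
  have hinj : Function.Injective support := fun ε ε' hεε' => funext fun i =>
    Bool.eq_iff_iff.2 (by simpa [support] using Finset.ext_iff.1 hεε' i)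
  obtain ⟨I, hI, hcard⟩ := exists_shatters_card_eq_of_sum_choose_lt
    (𝒜 := E.image support) (by rwa [card_image_of_injective _ hinj])
  let e : Fin r ↪ α :=
    (I.equivFinOfCardEq hcard).symm.toEmbedding.trans (Function.Embedding.subtype _)
  refine ⟨e, fun δ => ?_⟩
  obtain ⟨_, hu, hIu⟩ := hI (t := (univ.filter (δ · = true)).map e) fun _ hi => by
    obtain ⟨k, -, rfl⟩ := mem_map.1 hi
    simp [e]
  obtain ⟨ε, hε, rfl⟩ := mem_image.1 hu
  refine ⟨ε, hε, funext fun k => ?_⟩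
  refine Bool.eq_iff_iff.2 ?_
  simpa [support, e] using Finset.ext_iff.1 hIu (e k)

end SauerShelah

section ElementTrees

variable {X : Type*} {r s : ℕ}

def properLeaves (F : Set (Set X)) (T : List (Fin s → Bool) → Fin s → X) (n : ℕ) :
    Set (Fin n → Fin s → Bool) :=
  {ξ | ∃ A ∈ F, OpProper T ξ A}

def rootFiber (F : Set (Set X)) (T : List (Fin s → Bool) → Fin s → X) (ε : Fin s → Bool) :
    Set (Set X) :=
  {A ∈ F | ∀ i, T [] i ∈ A ↔ ε i = true}

lemma opProper_cons_iff {n : ℕ} (T : List (Fin s → Bool) → Fin s → X) (ε : Fin s → Bool)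
    (ξ : Fin n → Fin s → Bool) (A : Set X) :
    OpProper T (Fin.cons ε ξ) A ↔
      (∀ i, T [] i ∈ A ↔ ε i = true) ∧ OpProper (fun L => T (ε :: L)) ξ A := by
  simp only [OpProper, Fin.forall_fin_succ, List.ofFn_succ, Fin.cons_zero, Fin.cons_succ,
    Fin.val_zero, Fin.val_succ, List.take_zero, List.take_succ_cons]

lemma properLeaves_succ (F : Set (Set X)) (T : List (Fin s → Bool) → Fin s → X) (n : ℕ) :
    properLeaves F T (n + 1) =
      ⋃ ε, Fin.cons ε '' properLeaves (rootFiber F T ε) (fun L => T (ε :: L)) n := by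
  ext ξ
  rw [← Fin.cons_self_tail ξ]
  simp only [properLeaves, rootFiber, Set.mem_iUnion, Set.mem_image, Set.mem_ofPred_eq,
    Fin.cons_inj, opProper_cons_iff]
  constructor
  · rintro ⟨A, hA, hroot, hsub⟩
    exact ⟨ξ 0, Fin.tail ξ, ⟨A, ⟨hA, hroot⟩, hsub⟩, rfl, rfl⟩
  · rintro ⟨_, _, ⟨A, ⟨hA, hroot⟩, hsub⟩, rfl, rfl⟩
    exact ⟨A, hA, hroot, hsub⟩

lemma ncard_properLeaves_succ_le (F : Set (Set X)) (T : List (Fin s → Bool) → Fin s → X)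
    (n : ℕ) :
    (properLeaves F T (n + 1)).ncard ≤
      ∑ ε, (properLeaves (rootFiber F T ε) (fun L => T (ε :: L)) n).ncard := by
  rw [properLeaves_succ]
  refine (Set.ncard_iUnion_le_of_fintype _).trans_eq (sum_congr rfl fun ε _ => ?_)
  exact Set.ncard_image_of_injective _
    (Fin.cons_right_injective (α := fun _ => Fin s → Bool) ε)

lemma HasOpTree.mono {F G : Set (Set X)} (hFG : F ⊆ G) {k : ℕ} (hF : HasOpTree F r k) :
    HasOpTree G r k :=
  let ⟨T, hT⟩ := hF
  ⟨T, fun ξ => let ⟨A, hA, hξA⟩ := hT ξ; ⟨A, hFG hA, hξA⟩⟩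

lemma hasOpTree_zero_iff [Nonempty X] {F : Set (Set X)} : HasOpTree F r 0 ↔ F.Nonempty :=
  ⟨fun ⟨_, hT⟩ => let ⟨A, hA, _⟩ := hT Fin.elim0; ⟨A, hA⟩,
    fun ⟨A, hA⟩ => ⟨fun _ _ => Classical.arbitrary X, fun _ => ⟨A, hA, fun j => j.elim0⟩⟩⟩

lemma properLeaves_eq_empty [Nonempty X] {F : Set (Set X)} (hF : ¬HasOpTree F r 0)
    (T : List (Fin s → Bool) → Fin s → X) (n : ℕ) : properLeaves F T n = ∅ := by
  rw [hasOpTree_zero_iff, Set.not_nonempty_iff_eq_empty] at hF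
  simp [properLeaves, hF]

/-- The new root is labelled by `T [] ∘ e`; below its child `δ` hangs the tree of a fibre
whose trace reads `δ` through `e`. -/
lemma hasOpTree_succ {F : Set (Set X)} {T : List (Fin s → Bool) → Fin s → X} {b : ℕ}
    (e : Fin r → Fin s)
    (h : ∀ δ : Fin r → Bool, ∃ ε, ε ∘ e = δ ∧ HasOpTree (rootFiber F T ε) r b) :
    HasOpTree F r (b + 1) := by
  choose ε hε S hS using h
  refine ⟨fun L => match L with
    | [] => T [] ∘ e
    | δ :: L => S δ L, fun ξ => ?_⟩
  obtain ⟨A, ⟨hA, hroot⟩, hsub⟩ := hS (ξ 0) (Fin.tail ξ)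
  refine ⟨A, hA, ?_⟩
  rw [← Fin.cons_self_tail ξ, opProper_cons_iff]
  exact ⟨fun i => (hroot (e i)).trans (by rw [← congrFun (hε (ξ 0)) i]; rfl), hsub⟩

lemma card_le_sum_choose_of_forall_hasOpTree_rootFiber {F : Set (Set X)} {b : ℕ}
    (hF : ¬HasOpTree F r (b + 1)) (T : List (Fin s → Bool) → Fin s → X)
    (E : Finset (Fin s → Bool)) (hE : ∀ ε ∈ E, HasOpTree (rootFiber F T ε) r b) :
    #E ≤ ∑ j ∈ range r, s.choose j := by
  by_contra! hlt
  obtain ⟨e, he⟩ := exists_forall_comp_eq_of_sum_choose_lt E (by simpa using hlt)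
  refine hF (hasOpTree_succ (T := T) e fun δ => ?_)
  obtain ⟨ε, hε, rfl⟩ := he δ
  exact ⟨ε, rfl, hE ε hε⟩

end ElementTrees

def leafBound (a₀ a₁ n c : ℕ) : ℕ := ∑ i ∈ range c, n.choose i * a₀ ^ (n - i) * a₁ ^ i

lemma leafBound_zero_succ (a₀ a₁ c : ℕ) : leafBound a₀ a₁ 0 (c + 1) = 1 := by
  simp [leafBound, sum_range_succ']

lemma leafBound_mono (a₀ a₁ n : ℕ) : Monotone (leafBound a₀ a₁ n) :=
  fun _ _ hcd => sum_le_sum_of_subset (range_subset_range.2 hcd)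

lemma leafBound_succ_succ (a₀ a₁ n c : ℕ) :
    leafBound a₀ a₁ (n + 1) (c + 1) =
      a₀ * leafBound a₀ a₁ n (c + 1) + a₁ * leafBound a₀ a₁ n c := by
  have hpow (i : ℕ) :
      n.choose (i + 1) * a₀ ^ (n - i) = a₀ * (n.choose (i + 1) * a₀ ^ (n - (i + 1))) := by
    rcases lt_or_ge n (i + 1) with hlt | hle
    · simp [Nat.choose_eq_zero_of_lt hlt]
    · rw [show n - i = n - (i + 1) + 1 by omega, pow_succ]; ring
  simp only [leafBound, sum_range_succ' _ c, Nat.choose_succ_succ', add_mul, sum_add_distrib,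
    Nat.add_sub_add_right, Nat.choose_zero_right, Nat.sub_zero, hpow, mul_add, mul_sum]
  rw [sum_congr rfl fun i _ => (by ring : n.choose i * a₀ ^ (n - i) * a₁ ^ (i + 1) =
    a₁ * (n.choose i * a₀ ^ (n - i) * a₁ ^ i))]
  simp only [mul_assoc]
  ring

lemma sum_ite_mem_le {α : Type*} [Fintype α] [DecidableEq α] (E : Finset α) {a u v : ℕ}
    (hE : #E ≤ a) (hvu : v ≤ u) :
    ∑ x, (if x ∈ E then u else v) ≤ a * u + (Fintype.card α - a) * v := by
  simp only [sum_ite, sum_const, smul_eq_mul, filter_mem_eq_inter, univ_inter, filter_not,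
    card_sdiff, card_univ, inter_univ]
  have hEN := card_le_univ E
  rcases le_total a (Fintype.card α) with haN | hNa
  · obtain ⟨d, rfl⟩ := Nat.exists_eq_add_of_le hE
    obtain ⟨d', hd'⟩ := Nat.exists_eq_add_of_le haN
    rw [hd', Nat.add_sub_cancel_left, show #E + d + d' - #E = d + d' by omega]
    nlinarith
  · rw [Nat.sub_eq_zero_of_le hNa]
    nlinarith [Nat.mul_le_mul_right v hEN, Nat.sub_add_cancel hEN]

/-- Here `c` is one more than the rank bound, so that `c = 0` is the case `F = ∅`
(rank `-∞`) and the recursion in `c` needs no special case. -/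
lemma ncard_properLeaves_le {X : Type*} [Nonempty X] {r s c : ℕ} {F : Set (Set X)}
    (hF : ¬HasOpTree F r c) (T : List (Fin s → Bool) → Fin s → X) (n : ℕ) :
    (properLeaves F T n).ncard ≤
      leafBound (∑ j ∈ range r, s.choose j) (2 ^ s - ∑ j ∈ range r, s.choose j) n c := by
  classical
  induction n generalizing c F T with
  | zero =>
    obtain _ | b := c
    · simp [properLeaves_eq_empty hF]
    · rw [leafBound_zero_succ]
      exact (Set.ncard_le_card _).trans_eq (by simp)
  | succ n ih =>
    obtain _ | b := c
    · simp [properLeaves_eq_empty hF]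
    have hfiber (ε) : ¬HasOpTree (rootFiber F T ε) r (b + 1) :=
      fun h => hF (h.mono fun _ hA => hA.1)
    let E : Finset (Fin s → Bool) := {ε | HasOpTree (rootFiber F T ε) r b}
    calc (properLeaves F T (n + 1)).ncard
        ≤ ∑ ε, (properLeaves (rootFiber F T ε) (fun L => T (ε :: L)) n).ncard :=
          ncard_properLeaves_succ_le F T n
      _ ≤ ∑ ε, if ε ∈ E then leafBound _ _ n (b + 1) else leafBound _ _ n b :=
          sum_le_sum fun ε _ => by
            split_ifs with hε
            · exact ih (hfiber ε) _
            · exact ih (by simpa [E] using hε) _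
      _ ≤ _ * leafBound _ _ n (b + 1) +
            (Fintype.card (Fin s → Bool) - _) * leafBound _ _ n b :=
          sum_ite_mem_le E (card_le_sum_choose_of_forall_hasOpTree_rootFiber hF T E
            fun ε hε => by simpa [E] using hε) (leafBound_mono _ _ n b.le_succ)
      _ = leafBound _ _ (n + 1) (b + 1) := by
          rw [leafBound_succ_succ, Fintype.card_fun, Fintype.card_bool, Fintype.card_fin]

theorem op_rank_bounded_shatter_general {X : Type*} (r s b : ℕ) (hs : 1 ≤ s)
    (F : Set (Set X)) (hrank : ∀ m : ℕ, b < m → ¬ HasOpTree F r m)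
    (n : ℕ) (T : List (Fin s → Bool) → (Fin s → X)) :
    {ξ : Fin n → (Fin s → Bool) | ∃ A ∈ F, OpProper T ξ A}.ncard ≤
      ∑ i ∈ Finset.range (b + 1),
        n.choose i * (∑ j ∈ Finset.range r, s.choose j) ^ (n - i) *
          (2 ^ s - ∑ j ∈ Finset.range r, s.choose j) ^ i := by
  have : Nonempty X := ⟨T [] ⟨0, hs⟩⟩
  exact ncard_properLeaves_le (hrank (b + 1) b.lt_succ_self) T n

/-- Fix `r, s ≥ 1` and `b ≥ 0`, and let `a₀ = ∑_{i=0}^{r−1} C(s,i)`, `a₁ = 2^s − a₀`.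
For every `n`, every set system `(X, F)` with `opR_r(F) ≤ b`, and every `2^s`-ary element
tree of height `n` with labels from `X`, the number of leaves properly labeled by members of
`F` is at most `∑_{i=0}^{b} C(n,i)·a₀^{n−i}·a₁^{i}`; that is,
`ψ^s_{r,b}(n) ≤ ∑_{i=0}^{b} C(n,i) a₀^{n−i} a₁^{i}`. -/
theorem op_rank_bounded_shatter {X : Type*} (r s b : ℕ) (hr : 1 ≤ r) (hs : 1 ≤ s)
    (F : Set (Set X)) (hrank : ∀ m : ℕ, b < m → ¬ HasOpTree F r m)
    (n : ℕ) (T : List (Fin s → Bool) → (Fin s → X)) :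
    {ξ : Fin n → (Fin s → Bool) | ∃ A ∈ F, OpProper T ξ A}.ncard ≤
      ∑ i ∈ Finset.range (b + 1),
        n.choose i * (∑ j ∈ Finset.range r, s.choose j) ^ (n - i) *
          (2 ^ s - ∑ j ∈ Finset.range r, s.choose j) ^ i :=
  op_rank_bounded_shatter_general r s b hs F hrank n T
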